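/- arXiv:0711.1981 — 2 statements merged into one kernel-verified Lean document; each statement's English description precedes it below -/
import Mathlib

section
/- Let $M$ and $\Phi$ be symmetric real $n \times n$ matrices with $\Phi$ positive semidefinite of rank 1, and suppose $\operatorname{rank}(M + \Phi) = \operatorname{rank}(M) + 1$. Then $M + \Phi$ has the same number of negative eigenvalues as $M$, and exactly one more positive eigenvalue than $M$. -/
/-!
Write `P(A)`, `N(A)` for the numbers of positive and negative eigenvalues of a symmetric matrix
`A`. By the spectral theorem `P(A)` is the largest dimension of a subspace on which
`x ↦ ⟪x, A x⟫` is positive definite, and a subspace of dimension `n - P(A)` carries a form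
`≤ 0`. Intersecting these subspaces shows `P(A + B) ≤ P(A) + P(B)` and likewise for `N`.
For `Φ` positive semidefinite of rank one, `N(Φ) = 0` and `P(Φ) = 1`, so
`N(M + Φ) ≤ N(M)` and `P(M + Φ) ≤ P(M) + 1`; as `rank = N + P`, the rank hypothesis turns both
inequalities into equalities.
-/

open Module Submodule
open scoped RealInnerProductSpace

variable {ι κ ν E : Type*} [AddCommGroup E] [Module ℝ E]

lemma Module.Basis.repr_eq_zero_of_mem_span_image (b : Basis ι ℝ E) {s : Set ι} {x : E}
    (hx : x ∈ span ℝ (b '' s)) {i : ι} (hi : i ∉ s) : b.repr x i = 0 :=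
  Finsupp.notMem_support_iff.1 fun h => hi (b.mem_span_image.1 hx h)

variable [Fintype ι] [Fintype κ] [Fintype ν]

lemma Module.Basis.finrank_span_image (b : Basis ι ℝ E) (p : ι → Prop) :
    finrank ℝ (span ℝ (b '' {i | p i})) = Nat.card {i // p i} := by
  classical
  rw [Set.image_eq_range, Nat.card_eq_fintype_card]
  exact finrank_span_eq_card (b.linearIndependent.comp _ Subtype.val_injective)

def IsDiagonalForm (Q : E → ℝ) (b : Basis ι ℝ E) (μ : ι → ℝ) : Prop :=
  ∀ x, Q x = ∑ i, μ i * b.repr x i ^ 2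

namespace IsDiagonalForm

variable {Q Q₁ Q₂ : E → ℝ} {b : Basis ι ℝ E} {μ : ι → ℝ}

lemma neg (hQ : IsDiagonalForm Q b μ) : IsDiagonalForm (-Q) b (-μ) := fun x => by
  simp [hQ x]

lemma exists_posDef_subspace (hQ : IsDiagonalForm Q b μ) :
    ∃ V : Submodule ℝ E, finrank ℝ V = Nat.card {i // 0 < μ i} ∧
      ∀ x ∈ V, x ≠ 0 → 0 < Q x := by
  refine ⟨span ℝ (b '' {i | 0 < μ i}), b.finrank_span_image _, fun x hx hx0 => ?_⟩
  have hsupp : ∀ i, ¬ 0 < μ i → b.repr x i = 0 := fun i hi =>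
    b.repr_eq_zero_of_mem_span_image hx hi
  obtain ⟨j, hj⟩ : ∃ j, b.repr x j ≠ 0 := by
    by_contra! h
    exact hx0 (b.ext_elem_iff.2 (by simpa using h))
  rw [hQ x]
  refine Finset.sum_pos' (fun i _ => ?_) ⟨j, Finset.mem_univ j, ?_⟩
  · by_cases hi : 0 < μ i
    · positivity
    · simp [hsupp i hi]
  · have hμj : 0 < μ j := by_contra fun h => hj (hsupp j h)
    positivity

lemma exists_nonpos_subspace (hQ : IsDiagonalForm Q b μ) :
    ∃ W : Submodule ℝ E, finrank ℝ W + Nat.card {i // 0 < μ i} = finrank ℝ E ∧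
      ∀ x ∈ W, Q x ≤ 0 := by
  refine ⟨span ℝ (b '' {i | ¬ 0 < μ i}), ?_, fun x hx => ?_⟩
  · classical
    rw [b.finrank_span_image, finrank_eq_card_basis b, Nat.card_eq_fintype_card,
      Nat.card_eq_fintype_card, Fintype.card_subtype_compl]
    have := Fintype.card_subtype_le fun i => 0 < μ i
    omega
  · rw [hQ x]
    refine Finset.sum_nonpos fun i _ => ?_
    by_cases hi : 0 < μ i
    · simp [b.repr_eq_zero_of_mem_span_image hx (by simpa using hi)]
    · exact mul_nonpos_of_nonpos_of_nonneg (not_lt.1 hi) (sq_nonneg _)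

lemma finrank_le_card_pos (hQ : IsDiagonalForm Q b μ) {V : Submodule ℝ E}
    (hV : ∀ x ∈ V, x ≠ 0 → 0 < Q x) : finrank ℝ V ≤ Nat.card {i // 0 < μ i} := by
  have : FiniteDimensional ℝ E := b.finiteDimensional_of_finite
  obtain ⟨W, hW, hQW⟩ := hQ.exists_nonpos_subspace
  have hVW : Disjoint V W := disjoint_def.2 fun x hxV hxW => by
    by_contra hx
    exact (hV x hxV hx).not_ge (hQW x hxW)
  have := finrank_add_finrank_le_of_disjoint hVW
  omega

lemma card_pos_le_add {b₁ : Basis κ ℝ E} {μ₁ : κ → ℝ} {b₂ : Basis ν ℝ E} {μ₂ : ν → ℝ}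
    (h₁ : IsDiagonalForm Q₁ b₁ μ₁) (h₂ : IsDiagonalForm Q₂ b₂ μ₂)
    (h : IsDiagonalForm (Q₁ + Q₂) b μ) :
    Nat.card {i // 0 < μ i} ≤ Nat.card {i // 0 < μ₁ i} + Nat.card {i // 0 < μ₂ i} := by
  have : FiniteDimensional ℝ E := b.finiteDimensional_of_finite
  obtain ⟨V, hV, hQV⟩ := h.exists_posDef_subspace
  obtain ⟨W, hW, hQW⟩ := h₂.exists_nonpos_subspace
  have hVW : finrank ℝ ↥(V ⊓ W) ≤ Nat.card {i // 0 < μ₁ i} :=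
    h₁.finrank_le_card_pos fun x hx hx0 => by
      have hpos := hQV x hx.1 hx0
      have hnonpos := hQW x hx.2
      rw [Pi.add_apply] at hpos
      linarith
  have := finrank_sup_add_finrank_inf_eq V W
  have := (V ⊔ W).finrank_le
  omega

end IsDiagonalForm

namespace Matrix.IsHermitian

variable {n : Type*} [Fintype n] [DecidableEq n] {A B : Matrix n n ℝ}

lemma toEuclideanLin_eigenvectorBasis (hA : A.IsHermitian) (i : n) :
    toEuclideanLin A (hA.eigenvectorBasis i) = hA.eigenvalues i • hA.eigenvectorBasis i := by
  apply (WithLp.linearEquiv 2 ℝ (n → ℝ)).injective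
  simpa using hA.mulVec_eigenvectorBasis i

lemma isDiagonalForm (hA : A.IsHermitian) :
    IsDiagonalForm (fun x => ⟪x, toEuclideanLin A x⟫) hA.eigenvectorBasis.toBasis
      hA.eigenvalues := fun x => by
  set b := hA.eigenvectorBasis
  show ⟪x, toEuclideanLin A x⟫ = _
  rw [← b.sum_inner_mul_inner x]
  simp only [OrthonormalBasis.coe_toBasis_repr_apply, b.repr_apply_apply]
  refine Finset.sum_congr rfl fun i _ => ?_
  rw [← isSymmetric_toEuclideanLin_iff.mpr hA, toEuclideanLin_eigenvectorBasis,
    real_inner_smul_left, real_inner_comm]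
  ring

lemma card_pos_eigenvalues_add_le (hA : A.IsHermitian) (hB : B.IsHermitian) :
    Nat.card {i // 0 < (hA.add hB).eigenvalues i} ≤
      Nat.card {i // 0 < hA.eigenvalues i} + Nat.card {i // 0 < hB.eigenvalues i} :=
  hA.isDiagonalForm.card_pos_le_add hB.isDiagonalForm <| by
    convert (hA.add hB).isDiagonalForm using 1
    ext x
    simp [inner_add_right]

lemma card_neg_eigenvalues_add_le (hA : A.IsHermitian) (hB : B.IsHermitian) :
    Nat.card {i // (hA.add hB).eigenvalues i < 0} ≤
      Nat.card {i // hA.eigenvalues i < 0} + Nat.card {i // hB.eigenvalues i < 0} := by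
  -- `(hA.neg).eigenvalues` is a re-sorted list, not `-hA.eigenvalues`, so negate the weights instead.
  have := hA.isDiagonalForm.neg.card_pos_le_add hB.isDiagonalForm.neg <| by
    convert (hA.add hB).isDiagonalForm.neg using 1
    ext x
    simp [inner_add_right, add_comm]
  simp only [Pi.neg_apply, neg_pos] at this
  exact this

lemma rank_eq_card_neg_add_card_pos (hA : A.IsHermitian) :
    A.rank = Nat.card {i // hA.eigenvalues i < 0} + Nat.card {i // 0 < hA.eigenvalues i} := by
  classical
  rw [hA.rank_eq_card_non_zero_eigs, ← Nat.card_eq_fintype_card, ← Nat.card_sum]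
  exact Nat.card_congr ((Equiv.subtypeEquivRight fun i => ne_iff_lt_or_gt).trans
    (subtypeOrEquiv _ _ fun _ hlt hgt i h => (hlt i h).not_gt (hgt i h)))

end Matrix.IsHermitian

lemma Matrix.PosSemidef.card_neg_eigenvalues {n : Type*} [Fintype n] [DecidableEq n]
    {A : Matrix n n ℝ} (hA : A.PosSemidef) : Nat.card {i // hA.1.eigenvalues i < 0} = 0 := by
  have : IsEmpty {i // hA.1.eigenvalues i < 0} :=
    ⟨fun i => (hA.eigenvalues_nonneg i).not_gt i.2⟩
  exact Nat.card_of_isEmpty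

/-- Adding a rank-one positive semidefinite matrix `Φ` to a symmetric matrix `M`
with `rank (M + Φ) = rank M + 1` keeps the number of negative eigenvalues and
increases the number of positive eigenvalues by one. -/
theorem rank_one_psd_perturbation {n : ℕ}
    (M Φ : Matrix (Fin n) (Fin n) ℝ)
    (hM : M.IsHermitian) (hΦ : Φ.PosSemidef) (hrkΦ : Φ.rank = 1)
    (hrk : (M + Φ).rank = M.rank + 1) :
    Nat.card {i // (hM.add hΦ.1).eigenvalues i < 0} =
      Nat.card {i // hM.eigenvalues i < 0} ∧
    Nat.card {i // 0 < (hM.add hΦ.1).eigenvalues i} =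
      Nat.card {i // 0 < hM.eigenvalues i} + 1 := by
  have hneg := hM.card_neg_eigenvalues_add_le hΦ.1
  have hpos := hM.card_pos_eigenvalues_add_le hΦ.1
  have hΦneg := hΦ.card_neg_eigenvalues
  have hΦrank := hΦ.1.rank_eq_card_neg_add_card_pos
  have hMrank := hM.rank_eq_card_neg_add_card_pos
  have hMΦrank := (hM.add hΦ.1).rank_eq_card_neg_add_card_pos
  omega
end

section
/- Let $M$ and $\Phi$ be symmetric real $n \times n$ matrices with $\Phi$ negative semidefinite of rank 1, and suppose $\operatorname{rank}(M + \Phi) = \operatorname{rank}(M) + 1$. Then $M + \Phi$ has the same number of positive eigenvalues as $M$ and exactly one more negative eigenvalue than $M$. -/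
/-!
The number of positive (negative) eigenvalues of a real symmetric matrix is the largest dimension
of a subspace on which its quadratic form is positive (negative) definite: in an orthonormal
eigenbasis the form is `∑ λᵢ yᵢ²`. Since `Φ ≤ 0`, a subspace on which `M + Φ` is positive definite
is one on which `M` is, so `M + Φ` has no more positive eigenvalues than `M`. A subspace on which
`M + Φ` is negative definite meets `ker Φ`, where the two forms agree, in codimension at most
`rank Φ = 1`, so `M + Φ` has at most one more negative eigenvalue than `M`. The rank is the number
of nonzero eigenvalues, so `rank (M + Φ) = rank M + 1` forces both inequalities to be equalities.
-/

open Matrix Module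

section DiagonalForm

variable {ι V : Type*} [Fintype ι] [AddCommGroup V] [Module ℝ V]

theorem Module.Basis.finrank_le_card_pos_of_sum_pos (b : Basis ι ℝ V) (d : ι → ℝ)
    (W : Submodule ℝ V) (hW : ∀ x ∈ W, x ≠ 0 → 0 < ∑ i, d i * b.repr x i ^ 2) :
    finrank ℝ W ≤ Fintype.card {i // 0 < d i} := by
  let T : V →ₗ[ℝ] ({i // 0 < d i} → ℝ) :=
    LinearMap.funLeft ℝ ℝ Subtype.val ∘ₗ b.equivFun.toLinearMap
  have hT : Function.Injective (T ∘ₗ W.subtype) := by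
    rw [← LinearMap.ker_eq_bot, LinearMap.ker_eq_bot']
    intro x hx
    by_contra hx0
    have hvanish : ∀ i, 0 < d i → b.repr x i = 0 := fun i hi => congrFun hx ⟨i, hi⟩
    have hnonpos : ∑ i, d i * b.repr x i ^ 2 ≤ 0 := Finset.sum_nonpos fun i _ => by
      rcases le_or_gt (d i) 0 with hi | hi
      · exact mul_nonpos_of_nonpos_of_nonneg hi (sq_nonneg _)
      · simp [hvanish i hi]
    exact (hW x x.2 (by simpa using hx0)).not_ge hnonpos
  simpa using LinearMap.finrank_le_finrank_of_injective hT

theorem Module.Basis.exists_card_pos_le_finrank_of_sum_pos (b : Basis ι ℝ V) (d : ι → ℝ) :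
    ∃ W : Submodule ℝ V, Fintype.card {i // 0 < d i} ≤ finrank ℝ W ∧
      ∀ x ∈ W, x ≠ 0 → 0 < ∑ i, d i * b.repr x i ^ 2 := by
  refine ⟨Submodule.span ℝ (b '' {i | 0 < d i}), ?_, fun x hx hx0 => ?_⟩
  · rw [Set.image_eq_range]
    exact (finrank_span_eq_card (b.linearIndependent.comp _ Subtype.val_injective)).ge
  · have hvanish : ∀ i, d i ≤ 0 → b.repr x i = 0 := fun i hi => by
      by_contra h
      exact hi.not_gt (b.mem_span_image.1 hx (Finsupp.mem_support_iff.2 h))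
    have hterm : ∀ i, 0 ≤ d i * b.repr x i ^ 2 := fun i => by
      rcases le_or_gt (d i) 0 with hi | hi
      · simp [hvanish i hi]
      · positivity
    obtain ⟨j, hj⟩ : ∃ j, b.repr x j ≠ 0 := by
      by_contra! h
      exact hx0 (b.repr.injective (by ext i; simp [h i]))
    have hdj : 0 < d j := lt_of_not_ge fun h => hj (hvanish j h)
    calc 0 < d j * b.repr x j ^ 2 := by positivity
      _ ≤ ∑ i, d i * b.repr x i ^ 2 :=
        Finset.single_le_sum (fun i _ => hterm i) (Finset.mem_univ j)

end DiagonalForm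

theorem Matrix.IsHermitian.rank_eq_card_pos_eigenvalues_add_card_neg {𝕜 ι : Type*} [RCLike 𝕜]
    [Fintype ι] [DecidableEq ι] {A : Matrix ι ι 𝕜} (hA : A.IsHermitian) :
    A.rank =
      Fintype.card {i // 0 < hA.eigenvalues i} + Fintype.card {i // hA.eigenvalues i < 0} := by
  rw [hA.rank_eq_card_non_zero_eigs, ← Fintype.card_subtype_or_disjoint]
  · exact Fintype.card_congr (Equiv.subtypeEquivRight fun _ => ne_iff_lt_or_gt.trans or_comm)
  · exact disjoint_iff.2 (funext fun _ => eq_false fun h => lt_asymm h.1 h.2)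

namespace Matrix.IsHermitian

variable {ι : Type*} [Fintype ι] [DecidableEq ι] {A : Matrix ι ι ℝ}

noncomputable def eigenbasis (hA : A.IsHermitian) : Basis ι ℝ (ι → ℝ) :=
  hA.eigenvectorBasis.toBasis.map (WithLp.linearEquiv 2 ℝ (ι → ℝ))

theorem eigenbasis_apply (hA : A.IsHermitian) (i : ι) :
    hA.eigenbasis i = ⇑(hA.eigenvectorBasis i) := by
  simp [eigenbasis]

theorem eigenbasis_repr_apply (hA : A.IsHermitian) (x : ι → ℝ) (i : ι) :
    hA.eigenbasis.repr x i = hA.eigenbasis i ⬝ᵥ x := by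
  simpa [eigenbasis, OrthonormalBasis.repr_apply_apply, EuclideanSpace.inner_eq_star_dotProduct]
    using dotProduct_comm _ _

theorem dotProduct_mulVec_eq_sum (hA : A.IsHermitian) (x : ι → ℝ) :
    x ⬝ᵥ A *ᵥ x = ∑ i, hA.eigenvalues i * hA.eigenbasis.repr x i ^ 2 := by
  calc x ⬝ᵥ A *ᵥ x = x ⬝ᵥ A *ᵥ ∑ i, hA.eigenbasis.repr x i • hA.eigenbasis i := by
        rw [hA.eigenbasis.sum_repr]
    _ = ∑ i, hA.eigenbasis.repr x i * (hA.eigenvalues i * (hA.eigenbasis i ⬝ᵥ x)) := by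
      simp only [Matrix.mulVec_sum, mulVec_smul, eigenbasis_apply, mulVec_eigenvectorBasis,
        dotProduct_comm x, sum_dotProduct, smul_dotProduct, smul_eq_mul]
    _ = _ := Finset.sum_congr rfl fun i _ => by rw [← eigenbasis_repr_apply]; ring

theorem finrank_le_card_pos_eigenvalues (hA : A.IsHermitian) (W : Submodule ℝ (ι → ℝ))
    (hW : ∀ x ∈ W, x ≠ 0 → 0 < x ⬝ᵥ A *ᵥ x) :
    finrank ℝ W ≤ Fintype.card {i // 0 < hA.eigenvalues i} :=
  hA.eigenbasis.finrank_le_card_pos_of_sum_pos _ W fun x hx hx0 =>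
    hA.dotProduct_mulVec_eq_sum x ▸ hW x hx hx0

theorem exists_card_pos_eigenvalues_le_finrank (hA : A.IsHermitian) :
    ∃ W : Submodule ℝ (ι → ℝ), Fintype.card {i // 0 < hA.eigenvalues i} ≤ finrank ℝ W ∧
      ∀ x ∈ W, x ≠ 0 → 0 < x ⬝ᵥ A *ᵥ x := by
  simpa only [← hA.dotProduct_mulVec_eq_sum] using
    hA.eigenbasis.exists_card_pos_le_finrank_of_sum_pos hA.eigenvalues

theorem finrank_le_card_neg_eigenvalues (hA : A.IsHermitian) (W : Submodule ℝ (ι → ℝ))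
    (hW : ∀ x ∈ W, x ≠ 0 → x ⬝ᵥ A *ᵥ x < 0) :
    finrank ℝ W ≤ Fintype.card {i // hA.eigenvalues i < 0} := by
  simpa using hA.eigenbasis.finrank_le_card_pos_of_sum_pos (-hA.eigenvalues) W fun x hx hx0 => by
    simpa [← hA.dotProduct_mulVec_eq_sum] using hW x hx hx0

theorem exists_card_neg_eigenvalues_le_finrank (hA : A.IsHermitian) :
    ∃ W : Submodule ℝ (ι → ℝ), Fintype.card {i // hA.eigenvalues i < 0} ≤ finrank ℝ W ∧
      ∀ x ∈ W, x ≠ 0 → x ⬝ᵥ A *ᵥ x < 0 := by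
  simpa [← hA.dotProduct_mulVec_eq_sum] using
    hA.eigenbasis.exists_card_pos_le_finrank_of_sum_pos (-hA.eigenvalues)

theorem card_pos_eigenvalues_le_of_dotProduct_mulVec_le {B : Matrix ι ι ℝ} (hA : A.IsHermitian)
    (hB : B.IsHermitian) (hAB : ∀ x, x ⬝ᵥ A *ᵥ x ≤ x ⬝ᵥ B *ᵥ x) :
    Fintype.card {i // 0 < hA.eigenvalues i} ≤ Fintype.card {i // 0 < hB.eigenvalues i} := by
  obtain ⟨W, hcard, hW⟩ := hA.exists_card_pos_eigenvalues_le_finrank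
  exact hcard.trans <| hB.finrank_le_card_pos_eigenvalues W fun x hx hx0 =>
    (hW x hx hx0).trans_le (hAB x)

theorem card_neg_eigenvalues_add_le_s6 (hA : A.IsHermitian) (P : Matrix ι ι ℝ)
    (hAP : (A + P).IsHermitian) :
    Fintype.card {i // hAP.eigenvalues i < 0} ≤
      Fintype.card {i // hA.eigenvalues i < 0} + P.rank := by
  obtain ⟨W, hcard, hW⟩ := hAP.exists_card_neg_eigenvalues_le_finrank
  set K := LinearMap.ker P.mulVecLin
  have hK : P.rank + finrank ℝ K = Fintype.card ι := by
    simpa [Matrix.rank] using LinearMap.finrank_range_add_finrank_ker P.mulVecLin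
  have hsup : finrank ℝ ↥(W ⊔ K) ≤ Fintype.card ι := by
    simpa using Submodule.finrank_le (W ⊔ K)
  have hinf : finrank ℝ ↥(W ⊓ K) ≤ Fintype.card {i // hA.eigenvalues i < 0} := by
    refine hA.finrank_le_card_neg_eigenvalues _ fun x hx hx0 => ?_
    obtain ⟨hxW, hxK⟩ := Submodule.mem_inf.1 hx
    have hPx : P *ᵥ x = 0 := hxK
    simpa [add_mulVec, hPx] using hW x hxW hx0
  have := Submodule.finrank_sup_add_finrank_inf_eq W K
  omega

end Matrix.IsHermitian

/-- Adding a rank-one negative semidefinite matrix `Φ` to a symmetric matrix `M`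
with `rank (M + Φ) = rank M + 1` keeps the number of positive eigenvalues and
increases the number of negative eigenvalues by one. -/
theorem rank_one_nsd_perturbation {n : ℕ}
    (M Φ : Matrix (Fin n) (Fin n) ℝ)
    (hM : M.IsHermitian) (hΦ : (-Φ).PosSemidef) (hrkΦ : Φ.rank = 1)
    (hrk : (M + Φ).rank = M.rank + 1) :
    Nat.card {i // 0 < (hM.add (by simpa using hΦ.1.neg : Φ.IsHermitian)).eigenvalues i} =
      Nat.card {i // 0 < hM.eigenvalues i} ∧
    Nat.card {i // (hM.add (by simpa using hΦ.1.neg : Φ.IsHermitian)).eigenvalues i < 0} =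
      Nat.card {i // hM.eigenvalues i < 0} + 1 := by
  set hB := hM.add (by simpa using hΦ.1.neg : Φ.IsHermitian)
  have hΦ_nonpos (x : Fin n → ℝ) : x ⬝ᵥ Φ *ᵥ x ≤ 0 := by
    simpa [neg_mulVec] using hΦ.dotProduct_mulVec_nonneg x
  have hpos := hB.card_pos_eigenvalues_le_of_dotProduct_mulVec_le hM fun x => by
    simpa [add_mulVec] using hΦ_nonpos x
  have hneg := hM.card_neg_eigenvalues_add_le_s6 Φ hB
  have hrkM := hM.rank_eq_card_pos_eigenvalues_add_card_neg
  have hrkB := hB.rank_eq_card_pos_eigenvalues_add_card_neg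
  simp only [Nat.card_eq_fintype_card]
  omega
end
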